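/- Let X = [[A, B],[0, C]] be a block upper-triangular matrix where A, B, C have full column rank, σ_min(A) ≥ δ_A, ‖B‖ ≤ b, and σ_min(C) ≥ δ_C. Then σ_min(X) ≥ (δ_A δ_C / b) · (1 + (δ_A² + δ_C²)/b²)^{-1/2}. -/

import Mathlib

open Matrix

noncomputable def specNorm {m n : Type*} [Fintype m] [Fintype n] [DecidableEq n]
    (A : Matrix m n ℝ) : ℝ :=
  ‖LinearMap.toContinuousLinearMap (Matrix.toEuclideanLin A)‖

noncomputable def sMin {m n : Type*} [Fintype m] [Fintype n] [DecidableEq n]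
    (A : Matrix m n ℝ) : ℝ :=
  Real.sqrt (⨅ i, (show (Aᵀ * A).IsHermitian by
    simpa [conjTranspose_eq_transpose_of_trivial] using Matrix.isHermitian_conjTranspose_mul_self A).eigenvalues i)

noncomputable def singVals {m n : ℕ} (A : Matrix (Fin m) (Fin n) ℝ) : Fin n → ℝ :=
  fun i =>
    Real.sqrt ((show (Aᵀ * A).IsHermitian by
    simpa [conjTranspose_eq_transpose_of_trivial] using Matrix.isHermitian_conjTranspose_mul_self A).eigenvalues
      (Tuple.sort (show (Aᵀ * A).IsHermitian by
    simpa [conjTranspose_eq_transpose_of_trivial] using Matrix.isHermitian_conjTranspose_mul_self A).eigenvalues i.rev))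

noncomputable def pinv {m n : Type*} [Fintype m] [Fintype n] (A : Matrix m n ℝ) : Matrix n m ℝ :=
  open Classical in
  if h : ∃ B : Matrix n m ℝ,
      A * B * A = A ∧ B * A * B = B ∧ (A * B)ᵀ = A * B ∧ (B * A)ᵀ = B * A
  then h.choose else 0

/-!
Write `z = (x, y)`. From `dA ‖x‖ ≤ ‖A x‖ ≤ ‖A x + B y‖ + b ‖y‖` and `dC ‖y‖ ≤ ‖C y‖` one gets
`dA dC ‖x‖ ≤ dC ‖A x + B y‖ + b ‖C y‖` and `dA dC ‖y‖ ≤ dA ‖C y‖`; squaring, adding and applying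
Cauchy–Schwarz to the first right-hand side gives `(dA dC)² ‖z‖² ≤ (b² + dA² + dC²) ‖X z‖²`.
This suffices because `σ_min(M)² = min_{‖v‖ = 1} ‖M v‖²` is the least eigenvalue of `Mᵀ M`
(Rayleigh quotient in an orthonormal eigenbasis).
-/

open WithLp
open scoped RealInnerProductSpace

theorem Matrix.isHermitian_transpose_mul_self {m n : Type*} [Fintype m] (A : Matrix m n ℝ) :
    (Aᵀ * A).IsHermitian := by
  simpa [conjTranspose_eq_transpose_of_trivial] using isHermitian_conjTranspose_mul_self A

section

variable {m n : Type*} [Fintype m] [Fintype n] [DecidableEq n]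

theorem Matrix.IsHermitian.toEuclideanLin_eigenvectorBasis {M : Matrix n n ℝ} (hM : M.IsHermitian)
    (i : n) : toEuclideanLin M (hM.eigenvectorBasis i) = hM.eigenvalues i • hM.eigenvectorBasis i := by
  rw [toLpLin_apply, hM.mulVec_eigenvectorBasis, toLp_smul, toLp_ofLp]

theorem Matrix.IsHermitian.iInf_eigenvalues_mul_norm_sq_le {M : Matrix n n ℝ} (hM : M.IsHermitian)
    (v : EuclideanSpace ℝ n) :
    (⨅ i, hM.eigenvalues i) * ‖v‖ ^ 2 ≤ ⟪v, toEuclideanLin M v⟫ := by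
  set b := hM.eigenvectorBasis
  have hb : ∀ i, ⟪b i, toEuclideanLin M v⟫ = hM.eigenvalues i * ⟪b i, v⟫ := fun i => by
    rw [← isSymmetric_toEuclideanLin_iff.mpr hM, hM.toEuclideanLin_eigenvectorBasis,
      real_inner_smul_left]
  calc (⨅ i, hM.eigenvalues i) * ‖v‖ ^ 2 = ∑ i, (⨅ j, hM.eigenvalues j) * ⟪b i, v⟫ ^ 2 := by
        simp [← b.sum_sq_norm_inner_right v, Finset.mul_sum]
    _ ≤ ∑ i, hM.eigenvalues i * ⟪b i, v⟫ ^ 2 := Finset.sum_le_sum fun i _ =>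
        mul_le_mul_of_nonneg_right (ciInf_le (Set.finite_range _).bddBelow i) (sq_nonneg _)
    _ = ⟪v, toEuclideanLin M v⟫ := by
        rw [← b.sum_inner_mul_inner]
        refine Finset.sum_congr rfl fun i _ => ?_
        rw [hb, real_inner_comm]
        ring

theorem Matrix.norm_toEuclideanLin_sq (A : Matrix m n ℝ) (v : EuclideanSpace ℝ n) :
    ‖toEuclideanLin A v‖ ^ 2 = ⟪v, toEuclideanLin (Aᵀ * A) v⟫ := by
  classical
  rw [toLpLin_mul 2 2 2, ← conjTranspose_eq_transpose_of_trivial,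
    toEuclideanLin_conjTranspose_eq_adjoint, LinearMap.comp_apply, LinearMap.adjoint_inner_right,
    real_inner_self_eq_norm_sq]

theorem sMin_of_isEmpty [IsEmpty n] (A : Matrix m n ℝ) : sMin A = 0 := by
  rw [sMin, Real.iInf_of_isEmpty, Real.sqrt_zero]

theorem nonempty_of_sMin_pos {A : Matrix m n ℝ} (h : 0 < sMin A) : Nonempty n :=
  not_isEmpty_iff.mp fun _ => h.ne' (sMin_of_isEmpty A)

theorem sMin_mul_norm_le (A : Matrix m n ℝ) (v : EuclideanSpace ℝ n) :
    sMin A * ‖v‖ ≤ ‖toEuclideanLin A v‖ := by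
  have hH := A.isHermitian_transpose_mul_self
  calc sMin A * ‖v‖ = √((⨅ i, hH.eigenvalues i) * ‖v‖ ^ 2) := by
        rw [sMin, Real.sqrt_mul' _ (sq_nonneg _), Real.sqrt_sq (norm_nonneg _)]
    _ ≤ √(‖toEuclideanLin A v‖ ^ 2) := by
        rw [A.norm_toEuclideanLin_sq]
        exact Real.sqrt_le_sqrt (hH.iInf_eigenvalues_mul_norm_sq_le v)
    _ = ‖toEuclideanLin A v‖ := Real.sqrt_sq (norm_nonneg _)

theorem le_sMin_of_forall_mul_norm_le [Nonempty n] {A : Matrix m n ℝ} {K : ℝ} (hK : 0 ≤ K)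
    (h : ∀ v, K * ‖v‖ ≤ ‖toEuclideanLin A v‖) : K ≤ sMin A := by
  have hH := A.isHermitian_transpose_mul_self
  refine Real.le_sqrt_of_sq_le (le_ciInf fun i => ?_)
  set v := hH.eigenvectorBasis i
  have hv : ‖v‖ = 1 := hH.eigenvectorBasis.orthonormal.1 i
  calc K ^ 2 = (K * ‖v‖) ^ 2 := by rw [hv, mul_one]
    _ ≤ ‖toEuclideanLin A v‖ ^ 2 := pow_le_pow_left₀ (by positivity) (h v) 2
    _ = hH.eigenvalues i := by
        rw [A.norm_toEuclideanLin_sq, hH.toEuclideanLin_eigenvectorBasis, real_inner_smul_right,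
          real_inner_self_eq_norm_sq, hv, one_pow, mul_one]

end

theorem PiLp.norm_sq_toLp_two_sum {ι κ E : Type*} [Fintype ι] [Fintype κ] [SeminormedAddCommGroup E]
    (f : ι ⊕ κ → E) :
    ‖toLp 2 f‖ ^ 2 = ‖toLp 2 (f ∘ Sum.inl)‖ ^ 2 + ‖toLp 2 (f ∘ Sum.inr)‖ ^ 2 := by
  simp only [PiLp.norm_sq_eq_of_L2, Fintype.sum_sum_type]
  rfl

theorem norm_toLp_mulVec_le_specNorm_mul {m n : Type*} [Fintype m] [Fintype n] [DecidableEq n]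
    (B : Matrix m n ℝ) (y : n → ℝ) : ‖toLp 2 (B *ᵥ y)‖ ≤ specNorm B * ‖toLp 2 y‖ :=
  (toEuclideanLin B).toContinuousLinearMap.le_opNorm (toLp 2 y)

section

variable {m₁ m₂ n₁ n₂ : Type*} [Fintype m₁] [Fintype m₂] [Fintype n₁] [Fintype n₂]
  [DecidableEq n₁] [DecidableEq n₂]
  {A : Matrix m₁ n₁ ℝ} {B : Matrix m₁ n₂ ℝ} {C : Matrix m₂ n₂ ℝ} {dA dC b : ℝ}

theorem sq_mul_norm_sq_le_of_blockTriangular (hdA : 0 ≤ dA) (hdC : 0 ≤ dC) (hsA : dA ≤ sMin A)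
    (hB : specNorm B ≤ b) (hsC : dC ≤ sMin C) (x : n₁ → ℝ) (y : n₂ → ℝ) :
    (dA * dC) ^ 2 * (‖toLp 2 x‖ ^ 2 + ‖toLp 2 y‖ ^ 2) ≤
      (b ^ 2 + dA ^ 2 + dC ^ 2) * (‖toLp 2 (A *ᵥ x + B *ᵥ y)‖ ^ 2 + ‖toLp 2 (C *ᵥ y)‖ ^ 2) := by
  set u := ‖toLp 2 (A *ᵥ x + B *ᵥ y)‖
  set r := ‖toLp 2 (C *ᵥ y)‖
  have hb : 0 ≤ b := (norm_nonneg _).trans hB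
  have hAx : dA * ‖toLp 2 x‖ ≤ ‖toLp 2 (A *ᵥ x)‖ :=
    (mul_le_mul_of_nonneg_right hsA (norm_nonneg _)).trans (sMin_mul_norm_le A _)
  have hCy : dC * ‖toLp 2 y‖ ≤ r :=
    (mul_le_mul_of_nonneg_right hsC (norm_nonneg _)).trans (sMin_mul_norm_le C _)
  have hBy : ‖toLp 2 (B *ᵥ y)‖ ≤ b * ‖toLp 2 y‖ :=
    (norm_toLp_mulVec_le_specNorm_mul B y).trans (mul_le_mul_of_nonneg_right hB (norm_nonneg _))
  have hAxBy : ‖toLp 2 (A *ᵥ x)‖ ≤ u + ‖toLp 2 (B *ᵥ y)‖ :=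
    calc ‖toLp 2 (A *ᵥ x)‖ = ‖toLp 2 (A *ᵥ x + B *ᵥ y) - toLp 2 (B *ᵥ y)‖ := by
          rw [← toLp_sub, add_sub_cancel_right]
      _ ≤ u + ‖toLp 2 (B *ᵥ y)‖ := norm_sub_le _ _
  have hx : dA * dC * ‖toLp 2 x‖ ≤ dC * u + b * r :=
    calc dA * dC * ‖toLp 2 x‖ = dC * (dA * ‖toLp 2 x‖) := by ring
      _ ≤ dC * (u + b * ‖toLp 2 y‖) := by gcongr; linarith
      _ = dC * u + b * (dC * ‖toLp 2 y‖) := by ring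
      _ ≤ dC * u + b * r := by gcongr
  have hy : dA * dC * ‖toLp 2 y‖ ≤ dA * r := by
    rw [mul_assoc]
    gcongr
  calc (dA * dC) ^ 2 * (‖toLp 2 x‖ ^ 2 + ‖toLp 2 y‖ ^ 2)
        = (dA * dC * ‖toLp 2 x‖) ^ 2 + (dA * dC * ‖toLp 2 y‖) ^ 2 := by ring
    _ ≤ (dC * u + b * r) ^ 2 + (dA * r) ^ 2 := by gcongr
    _ ≤ (b ^ 2 + dA ^ 2 + dC ^ 2) * (u ^ 2 + r ^ 2) := by
        nlinarith [sq_nonneg (b * u - dC * r), sq_nonneg (dA * u)]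

theorem mul_div_sqrt_le_sMin_fromBlocks [Nonempty (n₁ ⊕ n₂)] (hdA : 0 ≤ dA) (hdC : 0 ≤ dC)
    (hsA : dA ≤ sMin A) (hB : specNorm B ≤ b) (hsC : dC ≤ sMin C) :
    dA * dC / √(b ^ 2 + dA ^ 2 + dC ^ 2) ≤ sMin (fromBlocks A B 0 C) := by
  refine le_sMin_of_forall_mul_norm_le (by positivity) fun z => ?_
  have key := sq_mul_norm_sq_le_of_blockTriangular hdA hdC hsA hB hsC
    (ofLp z ∘ Sum.inl) (ofLp z ∘ Sum.inr)
  rw [← PiLp.norm_sq_toLp_two_sum, toLp_ofLp] at key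
  rw [div_mul_eq_mul_div]
  refine div_le_of_le_mul₀ (Real.sqrt_nonneg _) (norm_nonneg _) ?_
  refine le_of_pow_le_pow_left₀ two_ne_zero (by positivity) ?_
  calc (dA * dC * ‖z‖) ^ 2 = (dA * dC) ^ 2 * ‖z‖ ^ 2 := by ring
    _ ≤ _ := key
    _ = (‖toEuclideanLin (fromBlocks A B 0 C) z‖ * √(b ^ 2 + dA ^ 2 + dC ^ 2)) ^ 2 := by
        rw [mul_pow, Real.sq_sqrt (by positivity), toLpLin_apply, fromBlocks_mulVec,
          PiLp.norm_sq_toLp_two_sum]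
        simp only [toLp_add, zero_mulVec, zero_add, Sum.elim_comp_inl, Sum.elim_comp_inr]
        ring

end

theorem sMin_blockTriangular_lower_bound_general {m1 m2 n1 n2 : ℕ}
    (A : Matrix (Fin m1) (Fin n1) ℝ) (B : Matrix (Fin m1) (Fin n2) ℝ)
    (C : Matrix (Fin m2) (Fin n2) ℝ)
    (dA dC b : ℝ) (hdA : 0 < dA) (hdC : 0 < dC) (hb : 0 < b)
    (hsA : dA ≤ sMin A) (hB : specNorm B ≤ b) (hsC : dC ≤ sMin C) :
    dA * dC / b * (Real.sqrt (1 + (dA ^ 2 + dC ^ 2) / b ^ 2))⁻¹ ≤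
      sMin (Matrix.fromBlocks A B 0 C) := by
  have : Nonempty (Fin n1) := nonempty_of_sMin_pos (hdA.trans_le hsA)
  have hbound : b * √(1 + (dA ^ 2 + dC ^ 2) / b ^ 2) = √(b ^ 2 + dA ^ 2 + dC ^ 2) := by
    rw [← Real.sqrt_sq hb.le, ← Real.sqrt_mul (sq_nonneg b), Real.sqrt_sq hb.le]
    field_simp
    ring_nf
  rw [← div_eq_mul_inv, div_div, hbound]
  exact mul_div_sqrt_le_sMin_fromBlocks hdA.le hdC.le hsA hB hsC

theorem sMin_blockTriangular_lower_bound {m1 m2 n1 n2 : ℕ}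
    (A : Matrix (Fin m1) (Fin n1) ℝ) (B : Matrix (Fin m1) (Fin n2) ℝ)
    (C : Matrix (Fin m2) (Fin n2) ℝ)
    (hA : A.rank = n1) (hBrank : B.rank = n2) (hC : C.rank = n2)
    (dA dC b : ℝ) (hdA : 0 < dA) (hdC : 0 < dC) (hb : 0 < b)
    (hsA : dA ≤ sMin A) (hB : specNorm B ≤ b) (hsC : dC ≤ sMin C) :
    dA * dC / b * (Real.sqrt (1 + (dA ^ 2 + dC ^ 2) / b ^ 2))⁻¹ ≤
      sMin (Matrix.fromBlocks A B 0 C) :=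
  sMin_blockTriangular_lower_bound_general A B C dA dC b hdA hdC hb hsA hB hsC
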